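/- Let E = {0} ∪ ⋃_{n=2}^∞ [n^{−n−1/2}, n^{−n}] ⊆ ℝ and define f : ℝ → ℝ by f(x) = ∫₀ˣ 1_E(t) dt (Lebesgue integral of the indicator of E). Then f is continuous and Lip f(x) = 1_E(x) for every x ∈ ℝ, i.e., Lip f equals the indicator function of E. -/

import Mathlib

open MeasureTheory Set Filter Topology

/-- The set `{0} ∪ ⋃_{n ≥ 2} [n^{-n-1/2}, n^{-n}]`. -/
noncomputable def Eset : Set ℝ :=
  {0} ∪ ⋃ n : ℕ, ⋃ (_ : 2 ≤ n), Set.Icc ((n : ℝ) ^ (-(n : ℝ) - 1/2)) ((n : ℝ) ^ (-(n : ℝ)))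

/-- `M_f(x,r) = (sup {|f(x) - f(y)| : |x - y| ≤ r}) / r`. -/
noncomputable def Mf (f : ℝ → ℝ) (x r : ℝ) : ℝ :=
  sSup {v : ℝ | ∃ y : ℝ, |x - y| ≤ r ∧ v = |f x - f y|} / r

/-- The big Lip function: `Lip f(x) = limsup_{r → 0⁺} M_f(x,r)`. -/
noncomputable def bigLip (f : ℝ → ℝ) (x : ℝ) : ℝ :=
  Filter.limsup (fun r => Mf f x r) (𝓝[>] (0 : ℝ))

/-- `f(x) = ∫₀ˣ 1_E(t) dt`. -/
noncomputable def fE (x : ℝ) : ℝ :=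
  ∫ t in (0 : ℝ)..x, Eset.indicator (fun _ => (1 : ℝ)) t

/- ---------------- Auxiliary definitions and lemmas ---------------- -/

noncomputable def aS (n : ℕ) : ℝ := (n : ℝ) ^ (-(n : ℝ) - 1/2)
noncomputable def bS (n : ℕ) : ℝ := (n : ℝ) ^ (-(n : ℝ))

lemma Eset_eq : Eset = {0} ∪ ⋃ n : ℕ, ⋃ (_ : 2 ≤ n), Set.Icc (aS n) (bS n) := rfl

lemma aS_pos {n : ℕ} (hn : 2 ≤ n) : 0 < aS n :=
  Real.rpow_pos_of_pos (by exact_mod_cast (by omega : 0 < n)) _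

lemma bS_pos {n : ℕ} (hn : 2 ≤ n) : 0 < bS n :=
  Real.rpow_pos_of_pos (by exact_mod_cast (by omega : 0 < n)) _

lemma one_lt_n {n : ℕ} (hn : 2 ≤ n) : (1 : ℝ) < (n : ℝ) := by exact_mod_cast hn.trans_lt' (by norm_num)

lemma aS_lt_bS {n : ℕ} (hn : 2 ≤ n) : aS n < bS n :=
  Real.rpow_lt_rpow_of_exponent_lt (one_lt_n hn) (by norm_num)

lemma bS_succ_lt_aS {n : ℕ} (hn : 2 ≤ n) : bS (n + 1) < aS n := by
  have hn1 : (1:ℝ) < (n:ℝ) := one_lt_n hn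
  have hn0 : (0:ℝ) < (n:ℝ) := by linarith
  have h1 : bS (n+1) < (n : ℝ) ^ (-((n:ℝ)+1)) := by
    unfold bS
    push_cast
    rw [Real.rpow_neg (by positivity), Real.rpow_neg hn0.le]
    apply inv_strictAnti₀ (Real.rpow_pos_of_pos hn0 _)
    exact Real.rpow_lt_rpow hn0.le (by linarith) (by positivity)
  have h2 : (n : ℝ) ^ (-((n:ℝ)+1)) ≤ aS n :=
    Real.rpow_le_rpow_of_exponent_le hn1.le (by linarith)
  linarith

lemma bS_anti : ∀ m n : ℕ, 2 ≤ m → m ≤ n → bS n ≤ bS m := by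
  intro m n hm hmn
  induction n, hmn using Nat.le_induction with
  | base => exact le_rfl
  | succ n hmn ih =>
    have h2n : 2 ≤ n := hm.trans hmn
    exact le_trans (le_of_lt (lt_trans (bS_succ_lt_aS h2n) (aS_lt_bS h2n))) ih

lemma aS_anti : ∀ m n : ℕ, 2 ≤ m → m ≤ n → aS n ≤ aS m := by
  intro m n hm hmn
  induction n, hmn using Nat.le_induction with
  | base => exact le_rfl
  | succ n hmn ih =>
    have h2n : 2 ≤ n := hm.trans hmn
    exact le_trans (le_of_lt (lt_trans (aS_lt_bS (by omega)) (bS_succ_lt_aS h2n))) ih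

lemma bS_two : bS 2 = 1/4 := by
  have : bS 2 = (2:ℝ) ^ ((-2 : ℤ) : ℝ) := by unfold bS; norm_num
  rw [this, Real.rpow_intCast]
  norm_num

lemma bS_le_inv {n : ℕ} (hn : 2 ≤ n) : bS n ≤ ((n : ℝ))⁻¹ := by
  have := Real.rpow_le_rpow_of_exponent_le (one_lt_n hn).le
    (show -(n:ℝ) ≤ -1 by exact_mod_cast neg_le_neg (by exact_mod_cast Nat.one_le_of_lt hn : (1:ℝ) ≤ n))
  simpa [Real.rpow_neg_one, bS] using this

lemma aS_eq {n : ℕ} (hn : 2 ≤ n) : aS n = bS n * (n : ℝ) ^ (-(1/2) : ℝ) := by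
  have hn0 : (0:ℝ) < (n:ℝ) := by exact_mod_cast (by omega : 0 < n)
  unfold aS bS
  rw [show -(n:ℝ) - 1/2 = -(n:ℝ) + (-(1/2)) by ring, Real.rpow_add hn0]

lemma mem_Eset_nonneg {t : ℝ} (ht : t ∈ Eset) : 0 ≤ t := by
  rcases ht with h | h
  · simp_all
  · simp only [mem_iUnion] at h
    obtain ⟨n, hn, ht⟩ := h
    exact le_trans (aS_pos hn).le ht.1

lemma mem_Eset_le {t : ℝ} (ht : t ∈ Eset) : t ≤ 1/4 := by
  rcases ht with h | h
  · simp_all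
  · simp only [mem_iUnion] at h
    obtain ⟨n, hn, ht⟩ := h
    exact le_trans ht.2 (by rw [← bS_two]; exact bS_anti 2 n le_rfl hn)

lemma Icc_subset_Eset {n : ℕ} (hn : 2 ≤ n) : Set.Icc (aS n) (bS n) ⊆ Eset := by
  intro t ht
  exact Or.inr (mem_iUnion.2 ⟨n, mem_iUnion.2 ⟨hn, ht⟩⟩)

lemma measEset : MeasurableSet Eset :=
  (measurableSet_singleton 0).union
    (MeasurableSet.iUnion fun _ => MeasurableSet.iUnion fun _ => measurableSet_Icc)

noncomputable def indE : ℝ → ℝ := Eset.indicator (fun _ => (1 : ℝ))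

lemma indE_nonneg (t : ℝ) : 0 ≤ indE t := Set.indicator_nonneg (fun _ _ => zero_le_one) t

lemma indE_le_one (t : ℝ) : indE t ≤ 1 := by
  unfold indE Set.indicator; split <;> norm_num

lemma indE_intble (a b : ℝ) : IntervalIntegrable indE volume a b := by
  rw [intervalIntegrable_iff]
  exact (IntegrableOn.indicator ((integrableOn_const_iff (C := (1:ℝ))).mpr (Or.inr measure_Ioc_lt_top)) measEset)

lemma fE_sub (x y : ℝ) : fE x - fE y = ∫ t in y..x, indE t :=
  intervalIntegral.integral_interval_sub_left (indE_intble 0 x) (indE_intble 0 y)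

lemma fE_abs_le (x y : ℝ) : |fE x - fE y| ≤ |x - y| := by
  rw [fE_sub]
  have := intervalIntegral.norm_integral_le_of_norm_le_const
    (C := 1) (a := y) (b := x) (f := indE) (fun t _ => by
      rw [Real.norm_eq_abs, abs_of_nonneg (indE_nonneg t)]; exact indE_le_one t)
  rw [Real.norm_eq_abs] at this
  calc |∫ t in y..x, indE t| ≤ 1 * |x - y| := this
  _ = |x - y| := one_mul _

lemma fE_continuous : Continuous fE := by
  apply LipschitzWith.continuous (K := 1)
  apply LipschitzWith.of_dist_le_mul
  intro x y
  rw [Real.dist_eq, Real.dist_eq, NNReal.coe_one, one_mul]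
  exact fE_abs_le x y

/-- The set appearing in `Mf`. -/
def Sset (x r : ℝ) : Set ℝ := {v : ℝ | ∃ y : ℝ, |x - y| ≤ r ∧ v = |fE x - fE y|}

lemma Mf_fE (x r : ℝ) : Mf fE x r = sSup (Sset x r) / r := rfl

lemma zero_mem_Sset {x r : ℝ} (hr : 0 ≤ r) : (0:ℝ) ∈ Sset x r :=
  ⟨x, by simpa using hr, by simp⟩

lemma Sset_le {x r : ℝ} : ∀ v ∈ Sset x r, v ≤ r := by
  rintro v ⟨y, hy, rfl⟩
  exact (fE_abs_le x y).trans hy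

lemma Sset_bddAbove (x r : ℝ) : BddAbove (Sset x r) := ⟨r, fun v hv => Sset_le v hv⟩

lemma Mf_nonneg {x r : ℝ} (hr : 0 < r) : 0 ≤ Mf fE x r :=
  div_nonneg (le_csSup (Sset_bddAbove x r) (zero_mem_Sset hr.le)) hr.le

lemma Mf_le_one {x r : ℝ} (hr : 0 < r) : Mf fE x r ≤ 1 :=
  (div_le_one hr).2 (Real.sSup_le Sset_le hr.le)

lemma Mf_eq_zero {x r : ℝ} (hr : 0 < r) (h : ∀ y, |x - y| ≤ r → fE y = fE x) :
    Mf fE x r = 0 := by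
  have hS : Sset x r = {0} := by
    ext v
    constructor
    · rintro ⟨y, hy, rfl⟩
      simp [h y hy]
    · rintro rfl
      exact zero_mem_Sset hr.le
  rw [Mf_fE, hS, csSup_singleton, zero_div]

lemma Mf_eq_one {x r : ℝ} (hr : 0 < r) (h : ∃ y, |x - y| ≤ r ∧ |fE x - fE y| = r) :
    Mf fE x r = 1 := by
  obtain ⟨y, hy, hxy⟩ := h
  have h1 : sSup (Sset x r) ≤ r := Real.sSup_le Sset_le hr.le
  have h2 : r ≤ sSup (Sset x r) := le_csSup (Sset_bddAbove x r) ⟨y, hy, hxy.symm⟩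
  rw [Mf_fE, le_antisymm h1 h2, div_self hr.ne']

/-- helper: `1/x < c` implies `c⁻¹ < x` for `0 < x`. -/
lemma inv_lt_of_one_div_lt {c x : ℝ} (hx : 0 < x) (h : 1/x < c) : c⁻¹ < x := by
  have hc : 0 < c := lt_trans (by positivity) h
  by_contra hcon
  push_neg at hcon
  have h1 : c * x ≤ c * c⁻¹ := mul_le_mul_of_nonneg_left hcon hc.le
  rw [mul_inv_cancel₀ hc.ne'] at h1
  rw [div_lt_iff₀ hx] at h
  linarith

/-- For `x` not in `Eset`, `Eset` misses a neighborhood. -/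
lemma not_mem_Eset_nbhd {x : ℝ} (hx : x ∉ Eset) :
    ∃ δ > 0, ∀ t : ℝ, |x - t| ≤ δ → t ∉ Eset := by
  rcases lt_trichotomy x 0 with hneg | rfl | hpos
  · refine ⟨-x/2, by linarith, fun t ht hmem => ?_⟩
    have h1 := mem_Eset_nonneg hmem
    rw [abs_le] at ht
    linarith
  · exact absurd (Or.inl rfl) hx
  rcases lt_or_ge (1/4 : ℝ) x with hbig | hle
  · refine ⟨(x - 1/4)/2, by linarith, fun t ht hmem => ?_⟩
    have h1 := mem_Eset_le hmem
    rw [abs_le] at ht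
    linarith
  · -- 0 < x ≤ 1/4
    obtain ⟨N, hN⟩ := exists_nat_gt (1/x)
    have hNx : bS (N + 2) < x := by
      have h1 : bS (N+2) ≤ ((N+2 : ℕ) : ℝ)⁻¹ := bS_le_inv (by omega)
      have h2 : (1:ℝ)/x < ((N+2:ℕ):ℝ) := by push_cast; push_cast at hN; linarith
      exact lt_of_le_of_lt h1 (inv_lt_of_one_div_lt hpos h2)
    have hEx : ∃ k, bS (k+2) < x := ⟨N, hNx⟩
    have hks : bS (Nat.find hEx + 2) < x := Nat.find_spec hEx
    set k := Nat.find hEx with hkdef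
    have hk1 : 1 ≤ k := by
      by_contra h
      push_neg at h
      have hk0 : k = 0 := by omega
      rw [hk0] at hks
      rw [bS_two] at hks
      linarith
    have hxb : x ≤ bS (k+1) := by
      have h1 := Nat.find_min hEx (show k - 1 < k by omega)
      rw [show k - 1 + 2 = k + 1 by omega] at h1
      exact not_lt.1 h1
    have hxa : x < aS (k+1) := by
      by_contra h
      push_neg at h
      exact hx (Icc_subset_Eset (by omega) ⟨h, hxb⟩)
    have hks' : bS (k+2) < x := hks
    refine ⟨min (x - bS (k+2)) (aS (k+1) - x) / 2, by
      apply div_pos _ (by norm_num)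
      exact lt_min (by linarith) (by linarith), fun t ht hmem => ?_⟩
    rw [abs_le] at ht
    have hmin1 := min_le_left (x - bS (k+2)) (aS (k+1) - x)
    have hmin2 := min_le_right (x - bS (k+2)) (aS (k+1) - x)
    have ht1 : bS (k+2) < t := by linarith [ht.1, ht.2]
    have ht2 : t < aS (k+1) := by linarith [ht.1, ht.2]
    rw [Eset_eq] at hmem
    rcases hmem with h0 | hI
    · rw [mem_singleton_iff] at h0
      have hb := bS_pos (n := k+2) (by omega)
      rw [h0] at ht1
      linarith
    · simp only [mem_iUnion] at hI
      obtain ⟨m, hm, htm⟩ := hI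
      rcases le_or_gt m (k+1) with hmn | hnm
      · have h2 := aS_anti m (k+1) hm hmn
        linarith [htm.1]
      · have h2 := bS_anti (k+2) m (by omega) (by omega)
        linarith [htm.2]

lemma fE_zero : fE 0 = 0 := intervalIntegral.integral_same

lemma fE_mono {y z : ℝ} (hyz : y ≤ z) : fE y ≤ fE z := by
  have h : 0 ≤ fE z - fE y := by
    rw [fE_sub]
    exact intervalIntegral.integral_nonneg hyz (fun t _ => indE_nonneg t)
  linarith

lemma fE_diff_of_subset {n : ℕ} (hn : 2 ≤ n) {y z : ℝ}
    (h : Set.uIcc y z ⊆ Set.Icc (aS n) (bS n)) : fE z - fE y = z - y := by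
  rw [fE_sub]
  have heq : Set.EqOn indE (fun _ => (1:ℝ)) (Set.uIcc y z) := fun t ht =>
    Set.indicator_of_mem (Icc_subset_Eset hn (h ht)) _
  rw [intervalIntegral.integral_congr heq]
  simp

lemma fE_const_near {x δ : ℝ} (hδE : ∀ t : ℝ, |x - t| ≤ δ → t ∉ Eset) {y : ℝ}
    (hy : |x - y| ≤ δ) : fE y = fE x := by
  have hδ0 : 0 ≤ δ := le_trans (abs_nonneg _) hy
  rw [abs_le] at hy
  have hsub : Set.uIcc x y ⊆ Set.Icc (x - δ) (x + δ) :=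
    Set.uIcc_subset_Icc ⟨by linarith, by linarith⟩ ⟨by linarith, by linarith⟩
  have h : fE y - fE x = 0 := by
    rw [fE_sub, intervalIntegral.integral_congr (g := fun _ => (0:ℝ)) ?_,
      intervalIntegral.integral_zero]
    intro t ht
    exact Set.indicator_of_notMem
      (hδE t (abs_le.2 ⟨by linarith [(hsub ht).2], by linarith [(hsub ht).1]⟩)) _
  linarith

/-- The function `f(x) = ∫₀ˣ 1_E(t) dt` is continuous and `Lip f = 1_E`. -/
theorem bigLip_fE_eq_indicator :
    Continuous fE ∧ ∀ x : ℝ, bigLip fE x = Eset.indicator (fun _ => (1 : ℝ)) x := by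
  refine ⟨fE_continuous, fun x => ?_⟩
  by_cases hx : x ∈ Eset
  · rw [Set.indicator_of_mem hx]
    rw [Eset_eq] at hx
    rcases hx with h0 | hI
    · -- x = 0
      rw [mem_singleton_iff] at h0
      subst h0
      have hub : ∀ᶠ r in 𝓝[>](0:ℝ), Mf fE 0 r ≤ 1 :=
        eventually_mem_nhdsWithin.mono (fun r hr => Mf_le_one hr)
      have hlb : ∀ᶠ r in 𝓝[>](0:ℝ), (0:ℝ) ≤ Mf fE 0 r :=
        eventually_mem_nhdsWithin.mono (fun r hr => Mf_nonneg hr)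
      have hBdd : IsBoundedUnder (· ≤ ·) (𝓝[>](0:ℝ)) (fun r => Mf fE 0 r) := ⟨1, hub⟩
      have hCo : IsCoboundedUnder (· ≤ ·) (𝓝[>](0:ℝ)) (fun r => Mf fE 0 r) :=
        Filter.isCoboundedUnder_le_of_eventually_le _ hlb
      have hle : Filter.limsup (fun r => Mf fE 0 r) (𝓝[>](0:ℝ)) ≤ 1 :=
        Filter.limsup_le_of_le hCo hub
      have key : ∀ ε : ℝ, 0 < ε →
          (1 - ε : ℝ) ≤ Filter.limsup (fun r => Mf fE 0 r) (𝓝[>](0:ℝ)) := by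
        intro ε hε
        apply Filter.le_limsup_of_frequently_le ?_ hBdd
        rw [Filter.frequently_iff]
        intro U hU
        obtain ⟨δ, hδ0, hsub⟩ := mem_nhdsGT_iff_exists_Ioo_subset.1 hU
        rw [Set.mem_Ioi] at hδ0
        obtain ⟨M, hM⟩ := exists_nat_gt (max (1/δ) (1/ε^2))
        have hn2 : 2 ≤ M + 2 := by omega
        set n := M + 2 with hndef
        have hb0 := bS_pos hn2
        have hnn0 : (0:ℝ) < (n:ℝ) := by exact_mod_cast (by omega : 0 < n)
        have hMn : ((M:ℕ):ℝ) ≤ ((n:ℕ):ℝ) := by exact_mod_cast (by omega : M ≤ n)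
        have h1 : bS n < δ := by
          have h2 : (1:ℝ)/δ < (n:ℝ) := by
            have := le_max_left (1/δ) (1/ε^2)
            linarith
          exact lt_of_le_of_lt (bS_le_inv hn2) (inv_lt_of_one_div_lt hδ0 h2)
        have hp0 : (0:ℝ) < (n:ℝ)^(-(1/2):ℝ) := Real.rpow_pos_of_pos hnn0 _
        have hsq : (n:ℝ)^(-(1/2):ℝ) * (n:ℝ)^(-(1/2):ℝ) = ((n:ℝ))⁻¹ := by
          rw [← Real.rpow_add hnn0, show (-(1/2:ℝ)) + (-(1/2)) = -1 by norm_num,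
            Real.rpow_neg_one]
        have hinv : ((n:ℝ))⁻¹ < ε^2 := by
          apply inv_lt_of_one_div_lt (by positivity)
          have := le_max_right (1/δ) (1/ε^2)
          linarith
        have hpe : (n:ℝ)^(-(1/2):ℝ) ≤ ε := by nlinarith [hsq, hinv, hp0, hε]
        have hdiff : fE (bS n) - fE (aS n) = bS n - aS n :=
          fE_diff_of_subset hn2 (by rw [Set.uIcc_of_le (aS_lt_bS hn2).le])
        have hmono : fE 0 ≤ fE (aS n) := fE_mono (aS_pos hn2).le
        have hab := aS_lt_bS hn2
        have hfb : bS n - aS n ≤ fE (bS n) := by rw [fE_zero] at hmono; linarith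
        have hval : bS n - aS n ≤ |fE 0 - fE (bS n)| := by
          rw [fE_zero, zero_sub, abs_neg, abs_of_nonneg (by linarith : (0:ℝ) ≤ fE (bS n))]
          exact hfb
        have hmem : |fE 0 - fE (bS n)| ∈ Sset 0 (bS n) :=
          ⟨bS n, by rw [zero_sub, abs_neg, abs_of_nonneg hb0.le], rfl⟩
        have h3 : bS n - aS n ≤ sSup (Sset 0 (bS n)) :=
          le_trans hval (le_csSup (Sset_bddAbove _ _) hmem)
        have h4 : (bS n - aS n) / bS n ≤ Mf fE 0 (bS n) := by
          rw [Mf_fE]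
          gcongr
        have h5 : (bS n - aS n) / bS n = 1 - (n:ℝ)^(-(1/2):ℝ) := by
          rw [aS_eq hn2]
          field_simp
        exact ⟨bS n, hsub ⟨hb0, h1⟩, by linarith⟩
      have hge : (1:ℝ) ≤ Filter.limsup (fun r => Mf fE 0 r) (𝓝[>](0:ℝ)) := by
        by_contra h
        push_neg at h
        have := key ((1 - Filter.limsup (fun r => Mf fE 0 r) (𝓝[>](0:ℝ)))/2) (by linarith)
        linarith
      unfold bigLip
      exact le_antisymm hle hge
    · -- x in one of the intervals
      simp only [mem_iUnion] at hI
      obtain ⟨n, hn, hxI⟩ := hI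
      have hab := aS_lt_bS hn
      have hev : ∀ᶠ r in 𝓝[>](0:ℝ), Mf fE x r = (fun _ => (1:ℝ)) r := by
        filter_upwards [Ioo_mem_nhdsGT_of_mem
          (show (0:ℝ) ∈ Set.Ico (0:ℝ) ((bS n - aS n)/2) from ⟨le_rfl, by linarith⟩)] with r hr
        obtain ⟨hr0, hr1⟩ := hr
        apply Mf_eq_one hr0
        rcases le_or_gt x ((aS n + bS n)/2) with hmid | hmid
        · refine ⟨x + r, ?_, ?_⟩
          · rw [show x - (x + r) = -r by ring, abs_neg, abs_of_nonneg hr0.le]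
          · have hsub : Set.uIcc x (x + r) ⊆ Set.Icc (aS n) (bS n) := by
              rw [Set.uIcc_of_le (by linarith)]
              intro t ht
              exact ⟨le_trans hxI.1 ht.1, le_trans ht.2 (by linarith)⟩
            have h1 := fE_diff_of_subset hn hsub
            have h2 : fE x - fE (x + r) = -r := by linarith
            rw [h2, abs_neg, abs_of_nonneg hr0.le]
        · refine ⟨x - r, ?_, ?_⟩
          · rw [show x - (x - r) = r by ring, abs_of_nonneg hr0.le]
          · have hsub : Set.uIcc (x - r) x ⊆ Set.Icc (aS n) (bS n) := by
              rw [Set.uIcc_of_le (by linarith)]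
              intro t ht
              exact ⟨by linarith [ht.1], le_trans ht.2 hxI.2⟩
            have h1 := fE_diff_of_subset hn hsub
            have h2 : fE x - fE (x - r) = r := by linarith
            rw [h2, abs_of_nonneg hr0.le]
      unfold bigLip
      rw [Filter.limsup_congr hev, Filter.limsup_const]
  · rw [Set.indicator_of_notMem hx]
    obtain ⟨δ, hδ, hδE⟩ := not_mem_Eset_nbhd hx
    have hev : ∀ᶠ r in 𝓝[>](0:ℝ), Mf fE x r = (fun _ => (0:ℝ)) r := by
      filter_upwards [Ioo_mem_nhdsGT_of_mem
        (show (0:ℝ) ∈ Set.Ico (0:ℝ) δ from ⟨le_rfl, hδ⟩)] with r hr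
      exact Mf_eq_zero hr.1 (fun y hy => fE_const_near hδE (le_trans hy hr.2.le))
    unfold bigLip
    rw [Filter.limsup_congr hev, Filter.limsup_const]
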